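/- arXiv:1312.2245 — 6 statements merged into one kernel-verified Lean document; each statement's English description precedes it below -/
import Mathlib

section
/- For every integer d ≥ 4, the polynomial P₃(x) = x³ + (2−d)x² + (1−2d)x + (2d−3) satisfies P₃(d − 3/(d+2)) < 0. -/
/-!
Substituting `x = d - t` with `t = 3 / (d + 2)` and using `t (d + 2) = 3` collapses `P₃(x)` to
`-(t³ + 2t² - 5t + 3)`, which is negative for every `t ≥ 0` since
`t³ + 2t² - 5t + 3 = t (t - 1)² + (2t - 3/2)² + 3/4`.
-/

def P₃ (d x : ℝ) : ℝ := x ^ 3 + (2 - d) * x ^ 2 + (1 - 2 * d) * x + (2 * d - 3)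

lemma P₃_sub_eq_of_mul_add_two_eq_three {d t : ℝ} (h : t * (d + 2) = 3) :
    P₃ d (d - t) = -(t ^ 3 + 2 * t ^ 2 - 5 * t + 3) := by
  unfold P₃
  linear_combination (2 * t - d) * h

lemma cube_add_two_sq_sub_five_add_three_pos {t : ℝ} (ht : 0 ≤ t) :
    0 < t ^ 3 + 2 * t ^ 2 - 5 * t + 3 := by
  nlinarith [mul_nonneg ht (sq_nonneg (t - 1)), sq_nonneg (2 * t - 3 / 2)]

lemma P₃_sub_three_div_neg {d : ℝ} (hd : -2 < d) : P₃ d (d - 3 / (d + 2)) < 0 := by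
  have hd₂ : 0 < d + 2 := by linarith
  rw [P₃_sub_eq_of_mul_add_two_eq_three (div_mul_cancel₀ 3 hd₂.ne')]
  exact neg_neg_of_pos (cube_add_two_sq_sub_five_add_three_pos (by positivity))

theorem stmt_0 (d : ℤ) (hd : 4 ≤ d) :
    (let D : ℝ := (d : ℝ); let x : ℝ := D - 3 / (D + 2);
      x ^ 3 + (2 - D) * x ^ 2 + (1 - 2 * D) * x + (2 * D - 3)) < 0 :=
  P₃_sub_three_div_neg (by exact_mod_cast (by omega : -2 < d))
end

section
/- For every integer d ≥ 4, the largest real root θ_d of x³ + (2−d)x² + (1−2d)x + (2d−3) satisfies d − 3/(d+2) < θ_d < d − 3/(d+3). -/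
/-!
Write `f` for the cubic. Clearing denominators,
`f (d - 3/(d+2)) · (d+2)³ = -3d³ - 3d² + 6d - 27 < 0` and `f (d - 3/(d+3)) · (d+3)³ = 6d² - 81 > 0`,
so `f` has a root strictly between the two bounds. On `[d - 1, ∞)` the cubic is increasing (its
derivative `(3x - 2d + 1)(x + 1)` vanishes only at `-1` and `(2d - 1)/3 ≤ d - 1`), and
`d - 3/(d+3)` lies in that ray, so `f` has no root at or beyond the upper bound.
-/

open Set

def thetaCubic (d x : ℝ) : ℝ :=
  x ^ 3 + (2 - d) * x ^ 2 + (1 - 2 * d) * x + (2 * d - 3)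

theorem continuous_thetaCubic (d : ℝ) : Continuous (thetaCubic d) := by
  unfold thetaCubic; fun_prop

theorem thetaCubic_sub_thetaCubic (d a b : ℝ) :
    thetaCubic d (d - 1 + b) - thetaCubic d (d - 1 + a) =
      (b - a) * (a ^ 2 + a * b + b ^ 2 + (2 * d - 1) * (a + b) + d * (d - 2)) := by
  unfold thetaCubic; ring

theorem thetaCubic_monotoneOn {d : ℝ} (hd : 2 ≤ d) :
    MonotoneOn (thetaCubic d) (Ici (d - 1)) := by
  intro x hx y hy hxy
  obtain ⟨a, ha, rfl⟩ : ∃ a ≥ 0, x = d - 1 + a := ⟨x - (d - 1), by simpa using hx, by ring⟩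
  obtain ⟨b, hb, rfl⟩ : ∃ b ≥ 0, y = d - 1 + b := ⟨y - (d - 1), by simpa using hy, by ring⟩
  have hfactor : 0 ≤ a ^ 2 + a * b + b ^ 2 + (2 * d - 1) * (a + b) + d * (d - 2) := by
    have : 0 ≤ 2 * d - 1 := by linarith
    have : 0 ≤ d * (d - 2) := by nlinarith
    positivity
  linarith [thetaCubic_sub_thetaCubic d a b, mul_nonneg (by linarith : 0 ≤ b - a) hfactor]

theorem thetaCubic_lower_neg {d : ℝ} (hd : 0 ≤ d) : thetaCubic d (d - 3 / (d + 2)) < 0 := by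
  have hcleared :
      thetaCubic d (d - 3 / (d + 2)) * (d + 2) ^ 3 = -3 * d ^ 3 - 3 * d ^ 2 + 6 * d - 27 := by
    unfold thetaCubic; field_simp; ring
  have : -3 * d ^ 3 - 3 * d ^ 2 + 6 * d - 27 < 0 := by nlinarith
  exact neg_of_mul_neg_left (hcleared ▸ this) (by positivity)

theorem thetaCubic_upper_pos {d : ℝ} (hd : 4 ≤ d) : 0 < thetaCubic d (d - 3 / (d + 3)) := by
  have hcleared : thetaCubic d (d - 3 / (d + 3)) * (d + 3) ^ 3 = 6 * d ^ 2 - 81 := by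
    have : d + 3 ≠ 0 := by linarith
    unfold thetaCubic; field_simp; ring
  have : 0 < 6 * d ^ 2 - 81 := by nlinarith
  exact pos_of_mul_pos_left (hcleared ▸ this) (by positivity)

theorem stmt_3 (d : ℤ) (hd : 4 ≤ d) (θ : ℝ)
    (hroot : θ ^ 3 + (2 - (d : ℝ)) * θ ^ 2 + (1 - 2 * (d : ℝ)) * θ + (2 * (d : ℝ) - 3) = 0)
    (hmax : ∀ y : ℝ,
      y ^ 3 + (2 - (d : ℝ)) * y ^ 2 + (1 - 2 * (d : ℝ)) * y + (2 * (d : ℝ) - 3) = 0 → y ≤ θ) :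
    (d : ℝ) - 3 / ((d : ℝ) + 2) < θ ∧ θ < (d : ℝ) - 3 / ((d : ℝ) + 3) := by
  have hd' : (4 : ℝ) ≤ d := by exact_mod_cast hd
  have hbounds : (d : ℝ) - 3 / (d + 2) < d - 3 / (d + 3) := by
    gcongr; linarith
  obtain ⟨c, hc, hfc⟩ := intermediate_value_Ioo hbounds.le (continuous_thetaCubic d).continuousOn
    ⟨thetaCubic_lower_neg (by linarith), thetaCubic_upper_pos hd'⟩
  refine ⟨hc.1.trans_le (hmax c hfc), lt_of_not_ge fun hθ => ?_⟩
  have hupper_ge : (d : ℝ) - 1 ≤ d - 3 / (d + 3) := by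
    have : 3 / ((d : ℝ) + 3) ≤ 1 := (div_le_one (by linarith)).2 (by linarith)
    linarith
  have hmono := thetaCubic_monotoneOn (by linarith) hupper_ge (hupper_ge.trans hθ) hθ
  have hfθ : thetaCubic d θ = 0 := hroot
  linarith [thetaCubic_upper_pos hd']
end

section
/- For positive reals n₁, n₂, n₃, the 3×3 matrix A₃ with rows (d − 2/n₁, 1/n₁, 1/n₁), (1/n₂, d − 2/n₂, 1/n₂), (1/n₃, 1/n₃, d − 2/n₃) has largest eigenvalue d, and its second largest eigenvalue equals d − 1/n₁ − 1/n₂ − 1/n₃ + sqrt(1/n₁² + 1/n₂² + 1/n₃² − 1/(n₁n₂) − 1/(n₂n₃) − 1/(n₃n₁)). -/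
/-!
Every row of `A₃` sums to `d`, so `(1, 1, 1)` is an eigenvector for `d`. Writing `a = 1/n₁`,
`b = 1/n₂`, `c = 1/n₃`, the characteristic polynomial factors as `(X - d)` times a quadratic with
roots `d - (a + b + c) ± r`, where `r² = a² + b² + c² - ab - bc - ca ≥ 0`. Since `a, b, c ≥ 0`, `r² ≤ (a + b + c)²`,
so both of these roots are at most `d`.
-/

open Polynomial

theorem roots_X_sub_C_mul_X_sub_C_mul_X_sub_C {R : Type*} [CommRing R] [IsDomain R]
    (x y z : R) : ((X - C x) * (X - C y) * (X - C z)).roots = {x, y, z} := by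
  simpa [mul_assoc] using roots_multiset_prod_X_sub_C ({x, y, z} : Multiset R)

theorem charpoly_quotientMatrix {R : Type*} [CommRing R] (d a b c r : R)
    (hr : r ^ 2 = a ^ 2 + b ^ 2 + c ^ 2 - a * b - b * c - c * a) :
    (!![d - 2 * a, a, a; b, d - 2 * b, b; c, c, d - 2 * c]).charpoly =
      (X - C d) * (X - C (d - a - b - c + r)) * (X - C (d - a - b - c - r)) := by
  have hr' : C r ^ 2 = C a ^ 2 + C b ^ 2 + C c ^ 2 - C a * C b - C b * C c - C c * C a := by
    rw [← map_pow, hr]; simp only [map_sub, map_add, map_mul, map_pow]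
  rw [Matrix.charpoly, Matrix.det_fin_three]
  simp only [Matrix.charmatrix_apply_eq, Matrix.charmatrix_apply_ne, Matrix.of_apply,
    Matrix.cons_val', Matrix.cons_val_zero, Matrix.cons_val_one, Matrix.cons_val,
    Matrix.cons_val_fin_one, ne_eq, Fin.reduceEq, not_false_eq_true, map_add, map_sub, map_mul,
    map_ofNat]
  linear_combination (X - C d) * hr'

theorem sq_add_sq_add_sq_sub_mul_nonneg (a b c : ℝ) :
    0 ≤ a ^ 2 + b ^ 2 + c ^ 2 - a * b - b * c - c * a := by
  nlinarith [sq_nonneg (a - b), sq_nonneg (b - c), sq_nonneg (c - a)]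

theorem roots_charpoly_quotientMatrix (d a b c : ℝ) :
    let r := √(a ^ 2 + b ^ 2 + c ^ 2 - a * b - b * c - c * a)
    (!![d - 2 * a, a, a; b, d - 2 * b, b; c, c, d - 2 * c]).charpoly.roots =
      {d, d - a - b - c + r, d - a - b - c - r} := by
  rw [charpoly_quotientMatrix d a b c _ (Real.sq_sqrt (sq_add_sq_add_sq_sub_mul_nonneg a b c)),
    roots_X_sub_C_mul_X_sub_C_mul_X_sub_C]

theorem sqrt_sq_add_sq_add_sq_sub_mul_le_add {a b c : ℝ} (ha : 0 ≤ a) (hb : 0 ≤ b) (hc : 0 ≤ c) :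
    √(a ^ 2 + b ^ 2 + c ^ 2 - a * b - b * c - c * a) ≤ a + b + c :=
  Real.sqrt_le_iff.2
    ⟨by positivity, by nlinarith [mul_nonneg ha hb, mul_nonneg hb hc, mul_nonneg hc ha]⟩

theorem exists_roots_charpoly_quotientMatrix (d : ℝ) {a b c : ℝ} (ha : 0 ≤ a) (hb : 0 ≤ b)
    (hc : 0 ≤ c) :
    let μ := d - a - b - c + √(a ^ 2 + b ^ 2 + c ^ 2 - a * b - b * c - c * a)
    ∃ ν : ℝ, (!![d - 2 * a, a, a; b, d - 2 * b, b; c, c, d - 2 * c]).charpoly.roots =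
      {d, μ, ν} ∧ ν ≤ μ ∧ μ ≤ d := by
  intro μ
  have hr := Real.sqrt_nonneg (a ^ 2 + b ^ 2 + c ^ 2 - a * b - b * c - c * a)
  refine ⟨_, roots_charpoly_quotientMatrix d a b c, by linarith, ?_⟩
  linarith [sqrt_sq_add_sq_add_sq_sub_mul_le_add ha hb hc]

theorem stmt_10 (d n₁ n₂ n₃ : ℝ) (h₁ : 0 < n₁) (h₂ : 0 < n₂) (h₃ : 0 < n₃) :
    let A : Matrix (Fin 3) (Fin 3) ℝ :=
      !![d - 2/n₁, 1/n₁, 1/n₁;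
         1/n₂, d - 2/n₂, 1/n₂;
         1/n₃, 1/n₃, d - 2/n₃]
    let μ : ℝ := d - 1/n₁ - 1/n₂ - 1/n₃ +
      Real.sqrt (1/n₁^2 + 1/n₂^2 + 1/n₃^2 - 1/(n₁*n₂) - 1/(n₂*n₃) - 1/(n₃*n₁))
    ∃ ν : ℝ, A.charpoly.roots = {d, μ, ν} ∧ ν ≤ μ ∧ μ ≤ d := by
  have hQ : 1/n₁^2 + 1/n₂^2 + 1/n₃^2 - 1/(n₁*n₂) - 1/(n₂*n₃) - 1/(n₃*n₁) =
      (1/n₁) ^ 2 + (1/n₂) ^ 2 + (1/n₃) ^ 2 - 1/n₁ * (1/n₂) - 1/n₂ * (1/n₃) - 1/n₃ * (1/n₁) := by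
    ring
  simpa only [mul_one_div, hQ] using exists_roots_charpoly_quotientMatrix d
    (one_div_pos.2 h₁).le (one_div_pos.2 h₂).le (one_div_pos.2 h₃).le
end

section
/- For positive reals n₁, n₂, n₃ and real d, let A₃ be the matrix from the three-part quotient with rows (d − 2/n₁, 1/n₁, 1/n₁), (1/n₂, d − 2/n₂, 1/n₂), (1/n₃, 1/n₃, d − 2/n₃). Then λ₂(A₃) ≥ d − 1/n₁ − 1/n₂ − 1/n₃, with equality iff n₁ = n₂ = n₃. -/
open Polynomial Matrix

set_option maxHeartbeats 1000000

theorem stmt_11 (d n₁ n₂ n₃ : ℝ) (h₁ : 0 < n₁) (h₂ : 0 < n₂) (h₃ : 0 < n₃)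
    (A : Matrix (Fin 3) (Fin 3) ℝ)
    (hA : A = !![d - 2/n₁, 1/n₁, 1/n₁;
                 1/n₂, d - 2/n₂, 1/n₂;
                 1/n₃, 1/n₃, d - 2/n₃])
    (lam2 lam3 : ℝ)
    (hroots : A.charpoly.roots = {d, lam2, lam3})
    (h32 : lam3 ≤ lam2) (h2d : lam2 ≤ d) :
    d - 1/n₁ - 1/n₂ - 1/n₃ ≤ lam2 ∧
      (lam2 = d - 1/n₁ - 1/n₂ - 1/n₃ ↔ (n₁ = n₂ ∧ n₂ = n₃)) := by
  set a := 1/n₁ with ha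
  set b := 1/n₂ with hb
  set c := 1/n₃ with hc
  have ha0 : 0 < a := by positivity
  have hb0 : 0 < b := by positivity
  have hc0 : 0 < c := by positivity
  have hmonic := A.charpoly_monic
  have hdeg : A.charpoly.natDegree = 3 := by simp
  have hprod : (A.charpoly.roots.map fun r => X - C r).prod = A.charpoly :=
    prod_multiset_X_sub_C_of_monic_of_roots_card_eq hmonic (by rw [hroots, hdeg]; rfl)
  rw [hroots] at hprod
  have hp : A.charpoly = (X - C d) * (X - C lam2) * (X - C lam3) := by
    rw [← hprod]
    simp [Multiset.map_cons, mul_assoc, mul_comm, mul_left_comm]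
  have heval : ∀ x : ℝ,
      (x - d) * (x - lam2) * (x - lam3) =
      (x - d) * ((x - d)^2 + 2*(a+b+c)*(x-d) + 3*(a*b+b*c+a*c)) := by
    intro x
    have h1 : A.charpoly.eval x = (x - d) * (x - lam2) * (x - lam3) := by
      rw [hp]; simp
    have h2 : A.charpoly.eval x =
        (x - d) * ((x - d)^2 + 2*(a+b+c)*(x-d) + 3*(a*b+b*c+a*c)) := by
      rw [Matrix.charpoly, ← Polynomial.coe_evalRingHom, RingHom.map_det,
        Matrix.det_fin_three]
      simp [charmatrix_apply, hA, Matrix.one_apply, ha, hb, hc]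
      ring
    rw [← h1, h2]
  have e1 := heval (d + 1)
  have e2 := heval (d - 1)
  have hS : (d - lam2) + (d - lam3) = 2*(a+b+c) := by nlinarith [e1, e2]
  have hP : (d - lam2) * (d - lam3) = 3*(a*b+b*c+a*c) := by nlinarith [e1, e2]
  clear hp hprod hmonic hdeg heval hroots hA e1 e2
  have hmain : d - a - b - c ≤ lam2 := by linarith
  refine ⟨hmain, ?_, ?_⟩
  · intro heq
    have h3 : d - lam3 = a + b + c := by linarith
    have hsq : (a+b+c)^2 = 3*(a*b+b*c+a*c) := by
      rw [← hP, heq, h3]; ring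
    have key : (a-b)^2 + (b-c)^2 + (a-c)^2 = 0 := by linear_combination 2*hsq
    have k1 : (a-b)^2 = 0 := by nlinarith [sq_nonneg (a-b), sq_nonneg (b-c), sq_nonneg (a-c)]
    have k2 : (b-c)^2 = 0 := by nlinarith [sq_nonneg (a-b), sq_nonneg (b-c), sq_nonneg (a-c)]
    have hab : a = b ∧ b = c := by
      constructor
      · have := sq_eq_zero_iff.mp k1; linarith
      · have := sq_eq_zero_iff.mp k2; linarith
    constructor
    · have := hab.1
      rw [ha, hb] at this
      field_simp at this
      linarith
    · have := hab.2
      rw [hb, hc] at this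
      field_simp at this
      linarith
  · rintro ⟨h12, h23⟩
    subst h12; subst h23
    have hbc : b = a := by rw [ha, hb]
    have hcc : c = a := by rw [ha, hc]
    rw [hbc, hcc] at hS hP
    have : (lam2 - lam3)^2 = 0 := by nlinarith
    have hl : lam2 = lam3 := by nlinarith [sq_nonneg (lam2 - lam3)]
    rw [hbc, hcc]
    nlinarith [hS, hP, hl]
end

section
/- Let d ≥ 4 and let G be a d-regular simple graph with κ'(G) = 2 (edge-connectivity 2) that does not contain 2 edge-disjoint spanning trees. Then G has at least 3(d+1) vertices. -/
/-!
The core is the easy half of the Nash-Williams–Tutte theorem: a finite graph `G` without `k`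
edge-disjoint spanning trees has a partition into `p` classes (the components of some `W`) with
fewer than `k (p - 1)` edges between classes. It is proved by the matroid-union exchange
argument in the contraction `G / B`, by induction on the number of components of `B`: take a
maximum packing of forests of `G / B`; if one of them does not span, an unused crossing edge
`e₀` exists, and the set `D` of edges reachable from `e₀` by exchanges is spanned by each forest
of the packing. Contract `D`, pack spanning trees there, and add back the forests inside `D`.

For `k = 2`, the classes receive fewer than `4p - 4` crossing edge ends, at least two each by
2-edge-connectivity, so at least three classes receive at most three. A class `S` of a
`d`-regular graph with fewer than `d` leaving edges satisfies `d |S| < |S| (|S| - 1) + d`,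
hence `|S| > d`; three such classes give `3 (d + 1)` vertices.
-/

open Finset Function

lemma three_le_card_filter_le_three {α : Type*} {s : Finset α} {b : α → ℕ}
    (hb : ∀ x ∈ s, 2 ≤ b x) (hsum : ∑ x ∈ s, b x + 6 ≤ 4 * #s) : 3 ≤ #{x ∈ s | b x ≤ 3} := by
  rw [← sum_filter_add_sum_filter_not s (fun x => b x ≤ 3),
    ← card_filter_add_card_filter_not (fun x => b x ≤ 3)] at hsum
  have hsmall : #{x ∈ s | b x ≤ 3} • 2 ≤ ∑ x ∈ s with b x ≤ 3, b x :=
    card_nsmul_le_sum _ _ _ fun x hx => hb x (mem_filter.1 hx).1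
  have hlarge : #{x ∈ s | ¬b x ≤ 3} • 4 ≤ ∑ x ∈ s with ¬b x ≤ 3, b x :=
    card_nsmul_le_sum _ _ _ fun x hx => by have := (mem_filter.1 hx).2; omega
  rw [smul_eq_mul] at hsmall hlarge
  omega

namespace SimpleGraph

variable {V : Type*}

lemma reachable_le_of_adj_le {X : SimpleGraph V} {r : V → V → Prop} (hr : Equivalence r)
    (h : X.Adj ≤ r) : X.Reachable ≤ r := by
  rw [reachable_eq_reflTransGen]
  exact Relation.reflTransGen_le_of_equivalence_of_le hr h

lemma reachable_sup_edge_cases {H : SimpleGraph V} {x y u v : V}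
    (h : (H ⊔ edge x y).Reachable u v) :
    H.Reachable u v ∨ (H.Reachable u x ∧ H.Reachable y v) ∨
      (H.Reachable u y ∧ H.Reachable x v) := by
  obtain ⟨p⟩ := h
  induction p with
  | nil => exact Or.inl .rfl
  | @cons a c v ha p ih =>
    rw [sup_adj, edge_adj] at ha
    rcases ha with ha | ⟨hac, -⟩
    · rcases ih with h1 | ⟨h1, h2⟩ | ⟨h1, h2⟩
      · exact Or.inl (ha.reachable.trans h1)
      · exact Or.inr (Or.inl ⟨ha.reachable.trans h1, h2⟩)
      · exact Or.inr (Or.inr ⟨ha.reachable.trans h1, h2⟩)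
    rcases hac with ⟨rfl, rfl⟩ | ⟨rfl, rfl⟩
    · rcases ih with h1 | ⟨-, h2⟩ | ⟨-, h2⟩
      · exact Or.inr (Or.inl ⟨.rfl, h1⟩)
      · exact Or.inr (Or.inl ⟨.rfl, h2⟩)
      · exact Or.inl h2
    · rcases ih with h1 | ⟨-, h2⟩ | ⟨-, h2⟩
      · exact Or.inr (Or.inr ⟨.rfl, h1⟩)
      · exact Or.inl h2
      · exact Or.inr (Or.inr ⟨.rfl, h2⟩)

lemma reachable_sup_edge_eq {H : SimpleGraph V} {x y : V} (h : H.Reachable x y) :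
    (H ⊔ edge x y).Reachable = H.Reachable := by
  ext u v
  refine ⟨fun huv => ?_, fun huv => huv.mono le_sup_left⟩
  rcases reachable_sup_edge_cases huv with h1 | ⟨h1, h2⟩ | ⟨h1, h2⟩
  · exact h1
  · exact h1.trans (h.trans h2)
  · exact h1.trans (h.symm.trans h2)

lemma reachable_sup_congr_left {X Y : SimpleGraph V} (h : X.Reachable = Y.Reachable)
    (Z : SimpleGraph V) : (X ⊔ Z).Reachable = (Y ⊔ Z).Reachable := by
  have key : ∀ {X Y : SimpleGraph V}, X.Reachable ≤ Y.Reachable →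
      (X ⊔ Z).Reachable ≤ (Y ⊔ Z).Reachable := fun hXY =>
    reachable_le_of_adj_le (reachable_is_equivalence _) fun u v huv =>
      huv.elim (fun hX => (hXY u v hX.reachable).mono le_sup_left)
        (fun hZ => hZ.reachable.mono le_sup_right)
  exact le_antisymm (key h.le) (key h.ge)

lemma fromEdgeSet_insert (e : Sym2 V) (S : Set (Sym2 V)) :
    fromEdgeSet (insert e S) = fromEdgeSet S ⊔ fromEdgeSet {e} := by
  rw [Set.insert_eq, fromEdgeSet_union, sup_comm]

lemma reachable_fromEdgeSet_of_mem {S : Set (Sym2 V)} {a b : V} (h : s(a, b) ∈ S) :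
    (fromEdgeSet S).Reachable a b := by
  rcases eq_or_ne a b with rfl | hab
  · exact .rfl
  · exact ((fromEdgeSet_adj S).2 ⟨h, hab⟩).reachable

lemma reachable_sup_fromEdgeSet_le {B H : SimpleGraph V} {S : Set (Sym2 V)}
    (hB : B.Reachable ≤ H.Reachable) (hS : ∀ a b, s(a, b) ∈ S → H.Reachable a b) :
    (B ⊔ fromEdgeSet S).Reachable ≤ H.Reachable :=
  reachable_le_of_adj_le (reachable_is_equivalence _) fun a b hab =>
    hab.elim (fun h => hB a b h.reachable) (fun h => hS a b ((fromEdgeSet_adj S).1 h).1)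

noncomputable def numComponents (H : SimpleGraph V) : ℕ := Nat.card H.ConnectedComponent

lemma numComponents_congr {X Y : SimpleGraph V} (h : X.Reachable = Y.Reachable) :
    X.numComponents = Y.numComponents :=
  Nat.card_congr (Quot.congrRight fun _ _ => by rw [h])

lemma numComponents_eq_one_iff {H : SimpleGraph V} : H.numComponents = 1 ↔ H.Connected := by
  rw [numComponents, Nat.card_eq_one_iff_unique]
  refine ⟨fun ⟨_, ⟨c⟩⟩ => ?_, fun hH => ?_⟩
  · have : Nonempty V := ⟨c.out⟩
    exact ⟨fun u w => ConnectedComponent.eq.1 (Subsingleton.elim _ _)⟩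
  · exact ⟨hH.preconnected.subsingleton_connectedComponent,
      ⟨H.connectedComponentMk hH.nonempty.some⟩⟩

section Finite

variable [Finite V]

lemma numComponents_anti {X Y : SimpleGraph V} (h : X ≤ Y) :
    Y.numComponents ≤ X.numComponents :=
  ConnectedComponent.card_le_card_of_le h

lemma numComponents_pos [Nonempty V] (H : SimpleGraph V) : 0 < H.numComponents :=
  Nat.card_pos

lemma numComponents_lt {X Y : SimpleGraph V} (h : X ≤ Y) {x y : V} (hX : ¬X.Reachable x y)
    (hY : Y.Reachable x y) : Y.numComponents < X.numComponents := by
  refine (numComponents_anti h).lt_of_ne fun heq => hX ?_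
  have hinj := (Nat.bijective_iff_surjective_and_card _).2
    ⟨ConnectedComponent.surjective_map_ofLE h, heq.symm⟩
  exact ConnectedComponent.eq.1 (hinj.1 (ConnectedComponent.eq.2 hY))

lemma numComponents_sup_edge {H : SimpleGraph V} {x y : V} (hxy : x ≠ y)
    (h : ¬H.Reachable x y) : (H ⊔ edge x y).numComponents + 1 = H.numComponents := by
  set f := ConnectedComponent.map (Hom.ofLE (le_sup_left : H ≤ H ⊔ edge x y))
  have hinj : Set.InjOn f {H.connectedComponentMk y}ᶜ := by
    intro c₁ hu c₂ hw huw
    induction c₁ using ConnectedComponent.ind with | h u => ?_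
    induction c₂ using ConnectedComponent.ind with | h w => ?_
    simp only [Set.mem_compl_iff, Set.mem_singleton_iff, ConnectedComponent.eq] at hu hw
    rcases reachable_sup_edge_cases (ConnectedComponent.eq.1 huw) with h1 | ⟨-, h2⟩ | ⟨h1, -⟩
    · exact ConnectedComponent.eq.2 h1
    · exact absurd h2.symm hw
    · exact absurd h1 hu
  have himage : f '' {H.connectedComponentMk y}ᶜ = Set.univ := by
    refine Set.eq_univ_of_forall (ConnectedComponent.ind fun z => ?_)
    by_cases hzy : H.Reachable z y
    · refine ⟨H.connectedComponentMk x, fun hx => h (ConnectedComponent.eq.1 hx), ?_⟩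
      have hxy' : (H ⊔ edge x y).Adj x y := Or.inr ((edge_adj ..).2 ⟨Or.inl ⟨rfl, rfl⟩, hxy⟩)
      exact ConnectedComponent.eq.2 (hxy'.reachable.trans (hzy.mono le_sup_left).symm)
    · exact ⟨H.connectedComponentMk z, fun hz => hzy (ConnectedComponent.eq.1 hz), rfl⟩
  rw [numComponents, numComponents, ← Set.ncard_univ, ← himage, hinj.ncard_image,
    ← Set.ncard_singleton (H.connectedComponentMk y), Set.ncard_compl_add_ncard]

lemma numComponents_le_sup_edge_add_one (H : SimpleGraph V) (x y : V) :
    H.numComponents ≤ (H ⊔ edge x y).numComponents + 1 := by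
  by_cases hr : H.Reachable x y
  · rw [numComponents_congr (reachable_sup_edge_eq hr)]
    exact Nat.le_succ _
  rcases eq_or_ne x y with rfl | hxy
  · exact absurd .rfl hr
  · exact (numComponents_sup_edge hxy hr).ge

lemma numComponents_le_sup_add (H : SimpleGraph V) (F : Finset (Sym2 V)) :
    H.numComponents ≤ (H ⊔ fromEdgeSet ↑F).numComponents + #F := by
  classical
  induction F using Finset.induction_on with
  | empty => simp
  | @insert e F he ih =>
    induction e using Sym2.ind with | _ x y =>
    rw [card_insert_of_notMem he, coe_insert, fromEdgeSet_insert, ← sup_assoc]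
    have := numComponents_le_sup_edge_add_one (H ⊔ fromEdgeSet ↑F) x y
    rw [edge] at this
    omega

end Finite

lemma numComponents_bot : (⊥ : SimpleGraph V).numComponents = Nat.card V :=
  Nat.card_congr (Equiv.ofBijective _
    ⟨fun _ _ h => reachable_bot.1 (ConnectedComponent.eq.1 h), Quot.mk_surjective⟩).symm

/-- `F` is (the edge set of) a forest in the graph obtained from `B` by contracting each
connected component to a point. -/
def IsForestMod (B : SimpleGraph V) (F : Finset (Sym2 V)) : Prop :=
  (B ⊔ fromEdgeSet ↑F).numComponents + #F = B.numComponents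

lemma isForestMod_empty (B : SimpleGraph V) : IsForestMod B ∅ := by
  simp [IsForestMod]

lemma isForestMod_congr {B B' : SimpleGraph V} (h : B.Reachable = B'.Reachable)
    (F : Finset (Sym2 V)) : IsForestMod B F ↔ IsForestMod B' F := by
  rw [IsForestMod, IsForestMod, numComponents_congr h,
    numComponents_congr (reachable_sup_congr_left h _)]

namespace IsForestMod

variable [Finite V] [DecidableEq V] {B : SimpleGraph V} {F : Finset (Sym2 V)}

lemma subset (hF : IsForestMod B F) {F' : Finset (Sym2 V)} (h : F' ⊆ F) : IsForestMod B F' := by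
  have h₁ := numComponents_le_sup_add B F'
  have h₂ := numComponents_le_sup_add (B ⊔ fromEdgeSet ↑F') (F \ F')
  rw [sup_assoc, ← fromEdgeSet_union, ← coe_union, union_sdiff_of_subset h] at h₂
  have h₃ := card_sdiff_add_card_eq_card h
  unfold IsForestMod at hF ⊢
  omega

lemma not_reachable_erase (hF : IsForestMod B F) {a b : V} (hab : s(a, b) ∈ F) :
    ¬(B ⊔ fromEdgeSet ↑(F.erase s(a, b))).Reachable a b := by
  intro hr
  have herase := hF.subset (erase_subset s(a, b) F)
  have hsplit : B ⊔ fromEdgeSet ↑F = (B ⊔ fromEdgeSet ↑(F.erase s(a, b))) ⊔ edge a b := by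
    rw [sup_assoc, edge, ← fromEdgeSet_union, ← coe_singleton, ← coe_union, union_comm,
      ← insert_eq, insert_erase hab]
  have hcard := card_erase_add_one hab
  unfold IsForestMod at hF herase
  rw [hsplit, numComponents_congr (reachable_sup_edge_eq hr)] at hF
  omega

lemma not_reachable (hF : IsForestMod B F) {a b : V} (hab : s(a, b) ∈ F) : ¬B.Reachable a b :=
  fun hr => hF.not_reachable_erase hab (hr.mono le_sup_left)

lemma insert (hF : IsForestMod B F) {a b : V} (hab : a ≠ b)
    (hr : ¬(B ⊔ fromEdgeSet ↑F).Reachable a b) : IsForestMod B (insert s(a, b) F) := by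
  have hnotMem : s(a, b) ∉ F := fun h =>
    hr ((reachable_fromEdgeSet_of_mem (S := (F : Set (Sym2 V))) h).mono le_sup_right)
  unfold IsForestMod at hF ⊢
  rw [card_insert_of_notMem hnotMem, coe_insert, fromEdgeSet_insert, ← sup_assoc]
  have := numComponents_sup_edge hab hr
  rw [edge] at this
  omega

lemma disjoint (hF : IsForestMod B F) {S : Finset (Sym2 V)}
    (hS : ∀ a b, s(a, b) ∈ S → B.Reachable a b) : Disjoint F S := by
  refine Finset.disjoint_left.2 fun e heF heS => ?_
  induction e using Sym2.ind with | _ a b =>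
  exact hF.not_reachable heF (hS a b heS)

lemma union {S : Finset (Sym2 V)} (hS : IsForestMod B S)
    (hF : IsForestMod (B ⊔ fromEdgeSet ↑S) F) : IsForestMod B (F ∪ S) := by
  have hdisj := hF.disjoint fun a b h => (reachable_fromEdgeSet_of_mem h).mono le_sup_right
  unfold IsForestMod at hS hF ⊢
  rw [card_union_of_disjoint hdisj, coe_union, fromEdgeSet_union, sup_comm (fromEdgeSet _),
    ← sup_assoc]
  omega

end IsForestMod

lemma Walk.IsTrail.reachable_deleteEdges_cases {H : SimpleGraph V} {u v a b : V}
    {p : H.Walk u v} (hp : p.IsTrail) (hab : s(a, b) ∈ p.edges) :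
    ((H.deleteEdges {s(a, b)}).Reachable u a ∧ (H.deleteEdges {s(a, b)}).Reachable b v) ∨
      ((H.deleteEdges {s(a, b)}).Reachable u b ∧ (H.deleteEdges {s(a, b)}).Reachable a v) := by
  induction p with
  | nil => simp at hab
  | @cons u w v huw q ih =>
    have hnd := hp.edges_nodup
    rw [Walk.edges_cons, List.nodup_cons] at hnd
    rw [Walk.edges_cons, List.mem_cons] at hab
    rcases hab with hab | hab
    · have hq : (H.deleteEdges {s(a, b)}).Reachable w v :=
        ⟨q.toDeleteEdges _ fun e he hes => hnd.1 (by rwa [← hab, ← Set.mem_singleton_iff.1 hes])⟩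
      rcases Sym2.eq_iff.1 hab.symm with ⟨rfl, rfl⟩ | ⟨rfl, rfl⟩
      · exact Or.inl ⟨.rfl, hq⟩
      · exact Or.inr ⟨.rfl, hq⟩
    · have hadj : (H.deleteEdges {s(a, b)}).Adj u w :=
        (deleteEdges_adj ..).2 ⟨huw, fun h => hnd.1 (Set.mem_singleton_iff.1 h ▸ hab)⟩
      rcases ih hp.of_cons hab with ⟨h1, h2⟩ | ⟨h1, h2⟩
      · exact Or.inl ⟨hadj.reachable.trans h1, h2⟩
      · exact Or.inr ⟨hadj.reachable.trans h1, h2⟩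

lemma Walk.IsTrail.reachable_deleteEdges_sup_edge {H : SimpleGraph V} {u v a b : V}
    {p : H.Walk u v} (hp : p.IsTrail) (hab : s(a, b) ∈ p.edges) :
    (H.deleteEdges {s(a, b)} ⊔ edge u v).Reachable a b := by
  have huv : (H.deleteEdges {s(a, b)} ⊔ edge u v).Reachable u v :=
    (reachable_fromEdgeSet_of_mem (Set.mem_singleton _)).mono le_sup_right
  rcases hp.reachable_deleteEdges_cases hab with ⟨h1, h2⟩ | ⟨h1, h2⟩
  · exact (h1.mono le_sup_left).symm.trans (huv.trans (h2.mono le_sup_left).symm)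
  · exact (h2.mono le_sup_left).trans (huv.symm.trans (h1.mono le_sup_left))

lemma reachable_sup_fromEdgeSet_exchange {B : SimpleGraph V} {S : Set (Sym2 V)} {x y : V}
    {P : (B ⊔ fromEdgeSet S).Walk x y} (hP : P.IsTrail) {f : Sym2 V} (hfP : f ∈ P.edges)
    (hfS : f ∈ S) :
    (B ⊔ fromEdgeSet (insert s(x, y) (S \ {f}))).Reachable = (B ⊔ fromEdgeSet S).Reachable := by
  induction f using Sym2.ind with | _ a b =>
  refine le_antisymm (reachable_sup_fromEdgeSet_le (Reachable.mono' le_sup_left) ?_)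
    (reachable_sup_fromEdgeSet_le (Reachable.mono' le_sup_left) ?_)
  · intro p q hpq
    rcases hpq with hpq | ⟨hpq, -⟩
    · rcases Sym2.eq_iff.1 hpq with ⟨rfl, rfl⟩ | ⟨rfl, rfl⟩
      · exact P.reachable
      · exact P.reachable.symm
    · exact (reachable_fromEdgeSet_of_mem hpq).mono le_sup_right
  · intro p q hpq
    by_cases hf : s(p, q) = s(a, b)
    · have hle : (B ⊔ fromEdgeSet S).deleteEdges {s(a, b)} ⊔ edge x y ≤
          B ⊔ fromEdgeSet (insert s(x, y) (S \ {s(a, b)})) := by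
        intro p q h
        simp only [sup_adj, deleteEdges_adj, fromEdgeSet_adj, edge_adj, Set.mem_insert_iff,
          Set.mem_sdiff, Set.mem_singleton_iff] at h ⊢
        aesop
      have hab := (hP.reachable_deleteEdges_sup_edge hfP).mono hle
      rcases Sym2.eq_iff.1 hf with ⟨rfl, rfl⟩ | ⟨rfl, rfl⟩
      · exact hab
      · exact hab.symm
    · exact (reachable_fromEdgeSet_of_mem
        (Set.mem_insert_of_mem _ (Set.mem_sdiff_singleton.2 ⟨hpq, hf⟩))).mono le_sup_right

lemma Walk.edges_subset_edgeSet_sup_fromEdgeSet_inter {B : SimpleGraph V} {S D : Set (Sym2 V)}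
    {x y : V} (P : (B ⊔ fromEdgeSet S).Walk x y) (hD : ∀ g ∈ P.edges, g ∈ S → g ∈ D) :
    ∀ g ∈ P.edges, g ∈ (B ⊔ fromEdgeSet (S ∩ D)).edgeSet := by
  intro g hg
  have hgP := P.edges_subset_edgeSet hg
  rw [edgeSet_sup, edgeSet_fromEdgeSet] at hgP ⊢
  exact hgP.imp id fun h => ⟨⟨h.1, hD g hg h.1⟩, h.2⟩

variable {ι : Type*}

structure IsPackingMod (G B : SimpleGraph V) (F : ι → Finset (Sym2 V)) : Prop where
  subset_edgeSet : ∀ i, (F i : Set (Sym2 V)) ⊆ G.edgeSet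
  isForestMod : ∀ i, IsForestMod B (F i)
  pairwise_disjoint : Pairwise (Disjoint on F)

namespace IsPackingMod

variable {G B : SimpleGraph V} {F : ι → Finset (Sym2 V)}

lemma const_empty (G B : SimpleGraph V) : IsPackingMod G B (fun _ : ι => ∅) :=
  ⟨fun _ => by simp, fun _ => isForestMod_empty B, fun _ _ _ => disjoint_empty_left _⟩

lemma update [DecidableEq ι] (hF : IsPackingMod G B F) {i : ι} {F' : Finset (Sym2 V)}
    (hsub : (F' : Set (Sym2 V)) ⊆ G.edgeSet) (hforest : IsForestMod B F')
    (hdisj : ∀ j, j ≠ i → Disjoint F' (F j)) : IsPackingMod G B (Function.update F i F') := by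
  refine ⟨fun j => ?_, fun j => ?_, fun j k hjk => ?_⟩
  · rcases eq_or_ne j i with rfl | hj
    · simpa using hsub
    · simpa [hj] using hF.subset_edgeSet j
  · rcases eq_or_ne j i with rfl | hj
    · simpa using hforest
    · simpa [hj] using hF.isForestMod j
  · rcases eq_or_ne j i with rfl | hj
    · simpa [onFun, hjk.symm] using hdisj k hjk.symm
    rcases eq_or_ne k i with rfl | hk
    · simpa [onFun, hj] using (hdisj j hj).symm
    · simpa [onFun, hj, hk] using hF.pairwise_disjoint hjk

lemma mono [Finite V] [DecidableEq V] (hF : IsPackingMod G B F) {S : ι → Finset (Sym2 V)}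
    (h : ∀ i, S i ⊆ F i) : IsPackingMod G B S :=
  ⟨fun i => (coe_subset.2 (h i)).trans (hF.subset_edgeSet i),
    fun i => (hF.isForestMod i).subset (h i),
    fun _ _ hij => (hF.pairwise_disjoint hij).mono (h _) (h _)⟩

lemma union [Finite V] [DecidableEq V] {B' : SimpleGraph V} {T : ι → Finset (Sym2 V)}
    (hF : IsPackingMod G B F) (hT : IsPackingMod G B' T)
    (hB' : ∀ i, (B ⊔ fromEdgeSet ↑(F i)).Reachable = B'.Reachable) :
    IsPackingMod G B (fun i => T i ∪ F i) := by
  have hTF : ∀ i j, Disjoint (T i) (F j) := fun i j =>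
    (hT.isForestMod i).disjoint fun a b h => by
      rw [← hB' j]
      exact (reachable_fromEdgeSet_of_mem (S := (F j : Set (Sym2 V))) h).mono le_sup_right
  refine ⟨fun i => ?_, fun i => ?_, fun i j hij => ?_⟩
  · rw [coe_union]
    exact Set.union_subset (hT.subset_edgeSet i) (hF.subset_edgeSet i)
  · exact (hF.isForestMod i).union ((isForestMod_congr (hB' i) _).2 (hT.isForestMod i))
  · simp only [onFun, disjoint_union_left, disjoint_union_right]
    exact ⟨⟨hT.pairwise_disjoint hij, (hTF j i).symm⟩, hTF i j, hF.pairwise_disjoint hij⟩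

end IsPackingMod

section Exchange

variable [DecidableEq V] [DecidableEq ι]

/-- States `(F, e)` reachable from `(F₀, e₀)` by exchanges: if `f ∈ F i` lies on a path of
`B ⊔ F i` joining the ends of the spare edge `e`, then `e` may replace `f` in `F i`, and `f`
becomes the new spare edge. -/
inductive ExchangeReachable (B : SimpleGraph V) (F₀ : ι → Finset (Sym2 V)) (e₀ : Sym2 V) :
    (ι → Finset (Sym2 V)) → Sym2 V → Prop
  | refl : ExchangeReachable B F₀ e₀ F₀ e₀
  | exchange {F : ι → Finset (Sym2 V)} {x y : V} {i : ι} {f : Sym2 V}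
      (h : ExchangeReachable B F₀ e₀ F s(x, y)) {P : (B ⊔ fromEdgeSet ↑(F i)).Walk x y}
      (hP : P.IsPath) (hfP : f ∈ P.edges) (hfF : f ∈ F i) :
      ExchangeReachable B F₀ e₀ (update F i (insert s(x, y) ((F i).erase f))) f

def exchangeEdges (B : SimpleGraph V) (F₀ : ι → Finset (Sym2 V)) (e₀ : Sym2 V) : Set (Sym2 V) :=
  {f | ∃ F, ExchangeReachable B F₀ e₀ F f}

variable {G B : SimpleGraph V} {F₀ F : ι → Finset (Sym2 V)} {e₀ e : Sym2 V}

lemma IsPackingMod.exchange [Finite V] (hF : IsPackingMod G B F) {x y : V}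
    (he : s(x, y) ∈ G.edgeSet) (heF : ∀ j, s(x, y) ∉ F j) {i : ι}
    {P : (B ⊔ fromEdgeSet ↑(F i)).Walk x y} (hP : P.IsPath) {f : Sym2 V} (hfP : f ∈ P.edges)
    (hfF : f ∈ F i) : IsPackingMod G B (Function.update F i (insert s(x, y) ((F i).erase f))) := by
  refine hF.update ?_ ?_ fun j hj => ?_
  · rw [coe_insert, coe_erase]
    exact Set.insert_subset he (Set.sdiff_subset.trans (hF.subset_edgeSet i))
  · have hreach := reachable_sup_fromEdgeSet_exchange hP.isTrail hfP (mem_coe.2 hfF)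
    rw [← coe_erase, ← coe_insert] at hreach
    unfold IsForestMod
    rw [numComponents_congr hreach, card_insert_of_notMem fun h => heF i (mem_of_mem_erase h),
      card_erase_add_one hfF]
    exact hF.isForestMod i
  · rw [disjoint_insert_left]
    exact ⟨heF j, ((hF.pairwise_disjoint hj.symm).mono_left (erase_subset _ _))⟩

lemma ExchangeReachable.invariant [Finite V] (hF₀ : IsPackingMod G B F₀)
    (he₀ : e₀ ∈ G.edgeSet) (he₀F : ∀ i, e₀ ∉ F₀ i) (h : ExchangeReachable B F₀ e₀ F e) :
    IsPackingMod G B F ∧ (∀ i, #(F i) = #(F₀ i)) ∧ e ∈ G.edgeSet ∧ ∀ i, e ∉ F i := by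
  induction h with
  | refl => exact ⟨hF₀, fun _ => rfl, he₀, he₀F⟩
  | @exchange F x y i f _ P hP hfP hfF ih =>
    obtain ⟨hF, hcard, he, heF⟩ := ih
    refine ⟨hF.exchange he heF hP hfP hfF, fun j => ?_, hF.subset_edgeSet i hfF, fun j => ?_⟩
    · rcases eq_or_ne j i with rfl | hj
      · rw [update_self, card_insert_of_notMem fun h => heF j (mem_of_mem_erase h),
          card_erase_add_one hfF, hcard]
      · rw [update_of_ne hj, hcard]
    · rcases eq_or_ne j i with rfl | hj
      · rw [update_self, mem_insert, not_or]
        exact ⟨fun h => heF j (h ▸ hfF), notMem_erase f _⟩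
      · rw [update_of_ne hj]
        exact Finset.disjoint_left.1 (hF.pairwise_disjoint hj.symm) hfF

lemma ExchangeReachable.reachable_sup_inter_eq (h : ExchangeReachable B F₀ e₀ F e) (i : ι) :
    (B ⊔ fromEdgeSet (↑(F i) ∩ exchangeEdges B F₀ e₀)).Reachable =
      (B ⊔ fromEdgeSet (↑(F₀ i) ∩ exchangeEdges B F₀ e₀)).Reachable := by
  induction h with
  | refl => rfl
  | @exchange F x y j f hxy P hP hfP hfF ih =>
    rcases eq_or_ne i j with rfl | hij
    · have hD : ∀ g ∈ P.edges, g ∈ (F i : Set (Sym2 V)) → g ∈ exchangeEdges B F₀ e₀ :=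
        fun g hg hgF => ⟨_, hxy.exchange hP hg hgF⟩
      have htr := P.edges_subset_edgeSet_sup_fromEdgeSet_inter hD
      have hxyD : s(x, y) ∈ exchangeEdges B F₀ e₀ := ⟨F, hxy⟩
      have hset : ↑(insert s(x, y) ((F i).erase f)) ∩ exchangeEdges B F₀ e₀ =
          insert s(x, y) ((↑(F i) ∩ exchangeEdges B F₀ e₀) \ {f}) := by
        ext g
        simp only [coe_insert, coe_erase, Set.mem_inter_iff, Set.mem_insert_iff, Set.mem_sdiff,
          Set.mem_singleton_iff, mem_coe]
        constructor
        · rintro ⟨rfl | ⟨hg, hgf⟩, hgD⟩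
          exacts [Or.inl rfl, Or.inr ⟨⟨hg, hgD⟩, hgf⟩]
        · rintro (rfl | ⟨⟨hg, hgD⟩, hgf⟩)
          exacts [⟨Or.inl rfl, hxyD⟩, ⟨Or.inr ⟨hg, hgf⟩, hgD⟩]
      rw [update_self, ← ih, hset]
      exact reachable_sup_fromEdgeSet_exchange (hP.transfer htr).isTrail
        (by rwa [Walk.edges_transfer]) ⟨hfF, _, hxy.exchange hP hfP hfF⟩
    · rw [update_of_ne hij, ih]

section Maximum

variable [Finite V] [Fintype ι] (hF₀ : IsPackingMod G B F₀)
  (hmax : ∀ F : ι → Finset (Sym2 V), IsPackingMod G B F → ∑ i, #(F i) ≤ ∑ i, #(F₀ i))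
  (he₀ : e₀ ∈ G.edgeSet) (he₀F : ∀ i, e₀ ∉ F₀ i)
include hF₀ hmax he₀ he₀F

lemma ExchangeReachable.reachable_of_isMax {a b : V} (h : ExchangeReachable B F₀ e₀ F s(a, b))
    (i : ι) : (B ⊔ fromEdgeSet ↑(F i)).Reachable a b := by
  obtain ⟨hF, hcard, he, heF⟩ := h.invariant hF₀ he₀ he₀F
  by_contra hr
  have hF' : IsPackingMod G B (Function.update F i (insert s(a, b) (F i))) := by
    refine hF.update ?_ ((hF.isForestMod i).insert (G.ne_of_adj he) hr) fun j hj => ?_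
    · rw [coe_insert]
      exact Set.insert_subset he (hF.subset_edgeSet i)
    · rw [disjoint_insert_left]
      exact ⟨heF j, hF.pairwise_disjoint hj.symm⟩
  refine (hmax _ hF').not_gt ?_
  calc ∑ j, #(F₀ j) = ∑ j, #(F j) := sum_congr rfl fun j _ => (hcard j).symm
    _ < ∑ j, #(Function.update F i (insert s(a, b) (F i)) j) := by
      refine sum_lt_sum (fun j _ => ?_) ⟨i, mem_univ _, ?_⟩
      · rcases eq_or_ne j i with rfl | hj
        · simpa using card_le_card (subset_insert _ _)
        · simp [hj]
      · simpa using card_lt_card (ssubset_insert (heF i))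

lemma reachable_sup_inter_exchangeEdges (i : ι) :
    (B ⊔ fromEdgeSet (↑(F₀ i) ∩ exchangeEdges B F₀ e₀)).Reachable =
      (B ⊔ fromEdgeSet (exchangeEdges B F₀ e₀)).Reachable := by
  refine le_antisymm (Reachable.mono' (sup_le_sup_left (fromEdgeSet_mono Set.inter_subset_right) _))
    (reachable_sup_fromEdgeSet_le (Reachable.mono' le_sup_left) ?_)
  rintro a b ⟨F, hF⟩
  obtain ⟨Q⟩ := hF.reachable_of_isMax hF₀ hmax he₀ he₀F i
  have hD : ∀ g ∈ Q.bypass.edges, g ∈ (F i : Set (Sym2 V)) → g ∈ exchangeEdges B F₀ e₀ :=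
    fun g hg hgF => ⟨_, hF.exchange Q.bypass_isPath hg hgF⟩
  rw [← hF.reachable_sup_inter_eq i]
  exact ⟨Q.bypass.transfer _ (Q.bypass.edges_subset_edgeSet_sup_fromEdgeSet_inter hD)⟩

end Maximum

end Exchange

def crossGraph (G W : SimpleGraph V) : SimpleGraph V where
  Adj a b := G.Adj a b ∧ ¬W.Reachable a b
  symm := ⟨fun _ _ h => ⟨h.1.symm, fun h' => h.2 h'.symm⟩⟩

@[simp]
lemma crossGraph_adj {G W : SimpleGraph V} {a b : V} :
    (G.crossGraph W).Adj a b ↔ G.Adj a b ∧ ¬W.Reachable a b :=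
  Iff.rfl

lemma crossGraph_le (G W : SimpleGraph V) : G.crossGraph W ≤ G := fun _ _ h => h.1

section TreePacking

variable [Finite V] [Fintype ι]

lemma exists_isPackingMod_max (G B : SimpleGraph V) :
    ∃ F₀ : ι → Finset (Sym2 V), IsPackingMod G B F₀ ∧
      ∀ F : ι → Finset (Sym2 V), IsPackingMod G B F → ∑ i, #(F i) ≤ ∑ i, #(F₀ i) := by
  obtain ⟨F₀, hF₀, hmax⟩ := Set.exists_max_image {F | IsPackingMod G B F}
    (fun F : ι → Finset (Sym2 V) => ∑ i, #(F i)) (Set.toFinite _) ⟨_, IsPackingMod.const_empty G B⟩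
  exact ⟨F₀, hF₀, fun F hF => hmax F hF⟩

lemma IsPackingMod.exists_crossGraph_edge_notMem [Nonempty V] [DecidableEq V]
    {G B : SimpleGraph V} {F : ι → Finset (Sym2 V)} (hF : IsPackingMod G B F)
    (hB : Fintype.card ι * B.numComponents ≤ (G.crossGraph B).edgeSet.ncard + Fintype.card ι)
    (hspan : ¬∀ i, (B ⊔ fromEdgeSet ↑(F i)).Connected) :
    ∃ x y, s(x, y) ∈ (G.crossGraph B).edgeSet ∧ ∀ i, s(x, y) ∉ F i := by
  simp only [not_forall] at hspan
  obtain ⟨i₀, hi₀⟩ := hspan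
  have hlt : ∑ i, (#(F i) + 1) < ∑ _i : ι, B.numComponents := by
    refine sum_lt_sum (fun i _ => ?_) ⟨i₀, mem_univ _, ?_⟩
    · have := hF.isForestMod i
      have := numComponents_pos (B ⊔ fromEdgeSet ↑(F i))
      unfold IsForestMod at *
      omega
    · have := hF.isForestMod i₀
      have := numComponents_pos (B ⊔ fromEdgeSet ↑(F i₀))
      rw [← numComponents_eq_one_iff] at hi₀
      unfold IsForestMod at *
      omega
  rw [sum_add_distrib, sum_const, sum_const, card_univ, smul_eq_mul, smul_eq_mul] at hlt
  have hsub : ↑(univ.biUnion F) ⊆ (G.crossGraph B).edgeSet := by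
    intro e he
    obtain ⟨i, -, hi⟩ := mem_biUnion.1 he
    induction e using Sym2.ind with | _ a b =>
    exact crossGraph_adj.2 ⟨hF.subset_edgeSet i hi, (hF.isForestMod i).not_reachable hi⟩
  obtain ⟨e, he, heF⟩ : ∃ e ∈ (G.crossGraph B).edgeSet, e ∉ ↑(univ.biUnion F) := by
    by_contra! h
    have := Set.ncard_le_ncard h
    rw [Set.ncard_coe_finset] at this
    have := card_biUnion_le (s := univ) (t := F)
    omega
  induction e using Sym2.ind with | _ x y =>
  exact ⟨x, y, he, fun i hi => heF (mem_biUnion.2 ⟨i, mem_univ _, hi⟩)⟩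

theorem exists_isPackingMod_connected_or_crossGraph [Nonempty V] (G B : SimpleGraph V) :
    (∃ W : SimpleGraph V, (G.crossGraph W).edgeSet.ncard + Fintype.card ι <
      Fintype.card ι * W.numComponents) ∨
    ∃ F : ι → Finset (Sym2 V), IsPackingMod G B F ∧ ∀ i, (B ⊔ fromEdgeSet ↑(F i)).Connected := by
  classical
  induction hn : B.numComponents using Nat.strong_induction_on generalizing B with
  | _ n ih =>
  subst hn
  by_cases hB : (G.crossGraph B).edgeSet.ncard + Fintype.card ι <
    Fintype.card ι * B.numComponents
  · exact Or.inl ⟨B, hB⟩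
  obtain ⟨F₀, hF₀, hmax⟩ := exists_isPackingMod_max (ι := ι) G B
  by_cases hspan : ∀ i, (B ⊔ fromEdgeSet ↑(F₀ i)).Connected
  · exact Or.inr ⟨F₀, hF₀, hspan⟩
  obtain ⟨x₀, y₀, ⟨he₀, hx₀y₀⟩, he₀F⟩ := hF₀.exists_crossGraph_edge_notMem (not_lt.1 hB) hspan
  set D := exchangeEdges B F₀ s(x₀, y₀)
  have hlt : (B ⊔ fromEdgeSet D).numComponents < B.numComponents :=
    numComponents_lt le_sup_left hx₀y₀
      ((reachable_fromEdgeSet_of_mem (S := D) ⟨F₀, .refl⟩).mono le_sup_right)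
  obtain hW | ⟨T, hT, hTconn⟩ := ih _ hlt (B ⊔ fromEdgeSet D) rfl
  · exact Or.inl hW
  set S := fun i => (F₀ i).filter (· ∈ D)
  have hS (i : ι) : (B ⊔ fromEdgeSet ↑(S i)).Reachable = (B ⊔ fromEdgeSet D).Reachable := by
    rw [← reachable_sup_inter_exchangeEdges hF₀ hmax he₀ he₀F i, coe_filter]
    rfl
  refine Or.inr ⟨fun i => T i ∪ S i, (hF₀.mono fun i => filter_subset _ _).union hT hS,
    fun i => ?_⟩
  have hconn := hTconn i
  rw [← numComponents_eq_one_iff] at hconn ⊢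
  rwa [coe_union, fromEdgeSet_union, sup_comm (fromEdgeSet _), ← sup_assoc,
    numComponents_congr (reachable_sup_congr_left (hS i) _)]

theorem exists_isTree_packing_or_crossGraph [Nonempty V] (G : SimpleGraph V) :
    (∃ W : SimpleGraph V, (G.crossGraph W).edgeSet.ncard + Fintype.card ι <
      Fintype.card ι * W.numComponents) ∨
    ∃ T : ι → SimpleGraph V, (∀ i, T i ≤ G ∧ (T i).IsTree) ∧
      Pairwise (Disjoint on fun i => (T i).edgeSet) := by
  obtain hW | ⟨F, hF, hconn⟩ := exists_isPackingMod_connected_or_crossGraph (ι := ι) G ⊥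
  · exact Or.inl hW
  have hedge (i : ι) : (fromEdgeSet (F i : Set (Sym2 V))).edgeSet = ↑(F i) := by
    rw [edgeSet_fromEdgeSet, sdiff_eq_left, Set.disjoint_left]
    exact fun e he => G.not_isDiag_of_mem_edgeSet (hF.subset_edgeSet i he)
  refine Or.inr ⟨fun i => fromEdgeSet (F i : Set (Sym2 V)), fun i => ⟨?_, ?_⟩, fun i j hij => ?_⟩
  · rw [← edgeSet_subset_edgeSet, hedge]
    exact hF.subset_edgeSet i
  · have hforest := hF.isForestMod i
    have hconn := hconn i
    rw [bot_sup_eq] at hconn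
    rw [IsForestMod, bot_sup_eq, numComponents_eq_one_iff.2 hconn, numComponents_bot] at hforest
    rw [isTree_iff_connected_and_card, hedge i, Nat.card_coe_set_eq, Set.ncard_coe_finset]
    exact ⟨hconn, by omega⟩
  · simpa only [onFun, hedge, disjoint_coe] using hF.pairwise_disjoint hij

end TreePacking

section Counting

open scoped Classical

variable [Fintype V] {G W : SimpleGraph V}

lemma degree_le_card_sub_one_add_degree_crossGraph [DecidableRel G.Adj] (v : V) :
    G.degree v ≤ #{w | W.connectedComponentMk w = W.connectedComponentMk v} - 1 +
      (G.crossGraph W).degree v := by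
  rw [← card_neighborFinset_eq_degree, ← card_neighborFinset_eq_degree,
    ← card_filter_add_card_filter_not
      (fun w => W.connectedComponentMk w = W.connectedComponentMk v)]
  gcongr
  · rw [← card_erase_of_mem (s := {w | W.connectedComponentMk w = W.connectedComponentMk v})
      (mem_filter.2 ⟨mem_univ v, rfl⟩)]
    refine card_le_card fun w hw => ?_
    rw [mem_filter, mem_neighborFinset] at hw
    exact mem_erase.2 ⟨(G.ne_of_adj hw.1).symm, mem_filter.2 ⟨mem_univ w, hw.2⟩⟩
  · intro w hw
    rw [mem_filter, mem_neighborFinset] at hw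
    rw [mem_neighborFinset, crossGraph_adj]
    exact ⟨hw.1, fun h => hw.2 (ConnectedComponent.eq.2 h).symm⟩

lemma le_sum_degree_crossGraph {k : ℕ}
    (hG : ∀ F : Finset (Sym2 V), ↑F ⊆ G.edgeSet → #F < k → (G.deleteEdges ↑F).Connected)
    {K : W.ConnectedComponent} (hK : ∃ v, W.connectedComponentMk v ≠ K) :
    k ≤ ∑ v with W.connectedComponentMk v = K, (G.crossGraph W).degree v := by
  by_contra! hlt
  set F := ({v | W.connectedComponentMk v = K} : Finset V).biUnion
    fun v => (G.crossGraph W).incidenceFinset v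
  have hcard : #F < k := by
    refine (card_biUnion_le.trans_eq ?_).trans_lt hlt
    exact sum_congr rfl fun v _ => card_incidenceFinset_eq_degree _ v
  have hFG : ↑F ⊆ G.edgeSet := by
    intro e he
    obtain ⟨v, -, hv⟩ := mem_biUnion.1 he
    exact edgeSet_mono (crossGraph_le G W)
      (mem_edgeFinset.1 ((G.crossGraph W).incidenceFinset_subset v hv))
  have hcross : ∀ a b, G.Adj a b → W.connectedComponentMk a = K →
      W.connectedComponentMk b ≠ K → s(a, b) ∈ F := by
    intro a b hab ha hb
    refine mem_biUnion.2 ⟨a, mem_filter.2 ⟨mem_univ _, ha⟩, ?_⟩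
    rw [mem_incidenceFinset]
    refine ⟨crossGraph_adj.2 ⟨hab, fun h => hb ?_⟩, Sym2.mem_mk_left a b⟩
    rw [← ha, ConnectedComponent.eq.2 h.symm]
  obtain ⟨w, hw⟩ := hK
  have hreach := (hG F hFG hcard).preconnected K.out w
  refine hw ((reachable_le_of_adj_le (r := fun a b => (W.connectedComponentMk a = K ↔
    W.connectedComponentMk b = K)) ⟨fun _ => Iff.rfl, Iff.symm, Iff.trans⟩ ?_ _ _ hreach).1
    K.out_eq)
  intro a b h
  obtain ⟨hab, hF⟩ := (deleteEdges_adj ..).1 h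
  refine ⟨fun ha => ?_, fun hb => ?_⟩ <;> by_contra h
  · exact hF (hcross a b hab ha h)
  · exact hF (Sym2.eq_swap ▸ hcross b a hab.symm hb h)

lemma lt_card_of_sum_degree_crossGraph_lt [DecidableRel G.Adj] {d : ℕ}
    (hreg : G.IsRegularOfDegree d) {K : W.ConnectedComponent}
    (h : ∑ v with W.connectedComponentMk v = K, (G.crossGraph W).degree v < d) :
    d < #{v | W.connectedComponentMk v = K} := by
  set s := #{v | W.connectedComponentMk v = K}
  have hs : 1 ≤ s := card_pos.2 ⟨K.out, mem_filter.2 ⟨mem_univ _, K.out_eq⟩⟩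
  have hsum : d * s ≤ s * (s - 1) + ∑ v with W.connectedComponentMk v = K,
      (G.crossGraph W).degree v := by
    calc d * s = ∑ v with W.connectedComponentMk v = K, G.degree v := by
          rw [sum_congr rfl fun v _ => hreg v, sum_const, smul_eq_mul, mul_comm]
      _ ≤ ∑ v with W.connectedComponentMk v = K, (s - 1 + (G.crossGraph W).degree v) := by
          refine sum_le_sum fun v hv => ?_
          have := degree_le_card_sub_one_add_degree_crossGraph (G := G) (W := W) v
          rwa [(mem_filter.1 hv).2] at this
      _ = _ := by rw [sum_add_distrib, sum_const, smul_eq_mul]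
  obtain ⟨t, ht⟩ : ∃ t, s = t + 1 := ⟨s - 1, by omega⟩
  rw [ht, Nat.add_sub_cancel] at hsum
  rw [ht]
  nlinarith

lemma sum_sum_degree_crossGraph :
    ∑ K : W.ConnectedComponent, ∑ v with W.connectedComponentMk v = K, (G.crossGraph W).degree v =
      2 * (G.crossGraph W).edgeSet.ncard := by
  rw [← coe_edgeFinset, Set.ncard_coe_finset, ← sum_degrees_eq_twice_card_edges]
  convert sum_fiberwise univ W.connectedComponentMk _

theorem three_mul_succ_le_card_of_crossGraph [DecidableRel G.Adj] {d : ℕ} (hd : 4 ≤ d)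
    (hreg : G.IsRegularOfDegree d)
    (hG : ∀ F : Finset (Sym2 V), ↑F ⊆ G.edgeSet → #F < 2 → (G.deleteEdges ↑F).Connected)
    (hW : (G.crossGraph W).edgeSet.ncard + 2 < 2 * W.numComponents) :
    3 * (d + 1) ≤ Fintype.card V := by
  set b := fun K : W.ConnectedComponent =>
    ∑ v with W.connectedComponentMk v = K, (G.crossGraph W).degree v
  have hnc : W.numComponents = Fintype.card W.ConnectedComponent := Nat.card_eq_fintype_card
  have hb (K : W.ConnectedComponent) (_ : K ∈ univ) : 2 ≤ b K := by
    have : Nontrivial W.ConnectedComponent := Fintype.one_lt_card_iff_nontrivial.1 (by omega)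
    obtain ⟨K', hK'⟩ := exists_ne K
    obtain ⟨v, rfl⟩ := K'.exists_rep
    exact le_sum_degree_crossGraph hG ⟨v, hK'⟩
  have hsmall := three_le_card_filter_le_three hb
    (by rw [sum_sum_degree_crossGraph, card_univ, ← hnc]; omega)
  calc 3 * (d + 1) ≤ #{K | b K ≤ 3} • (d + 1) := Nat.mul_le_mul_right _ hsmall
    _ ≤ ∑ K with b K ≤ 3, #{v | W.connectedComponentMk v = K} :=
      card_nsmul_le_sum _ _ _ fun K hK =>
        lt_card_of_sum_degree_crossGraph_lt hreg ((mem_filter.1 hK).2.trans_lt (by omega))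
    _ ≤ ∑ K, #{v | W.connectedComponentMk v = K} := sum_le_sum_of_subset (filter_subset _ _)
    _ = Fintype.card V := by
      rw [← card_univ]
      convert (card_eq_sum_card_fiberwise fun v _ => mem_univ (W.connectedComponentMk v)).symm

end Counting

end SimpleGraph

theorem stmt_13_general {V : Type*} [Fintype V]
    (d : ℕ) (hd : 4 ≤ d)
    (G : SimpleGraph V) [DecidableRel G.Adj]
    (hreg : G.IsRegularOfDegree d)
    (hmin : ∀ F : Finset (Sym2 V), (↑F : Set (Sym2 V)) ⊆ G.edgeSet → F.card < 2 →
      (G.deleteEdges (↑F : Set (Sym2 V))).Connected)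
    (hnotrees : ¬ ∃ T₁ T₂ : SimpleGraph V,
      T₁ ≤ G ∧ T₂ ≤ G ∧ T₁.IsTree ∧ T₂.IsTree ∧ Disjoint T₁.edgeSet T₂.edgeSet) :
    3 * (d + 1) ≤ Fintype.card V := by
  have : Nonempty V := by simpa using (hmin ∅ (by simp) (by simp)).nonempty
  obtain ⟨W, hW⟩ | ⟨T, hT, hdisj⟩ := SimpleGraph.exists_isTree_packing_or_crossGraph (ι := Bool) G
  · rw [Fintype.card_bool] at hW
    exact SimpleGraph.three_mul_succ_le_card_of_crossGraph hd hreg hmin hW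
  · exact absurd ⟨T true, T false, (hT true).1, (hT false).1, (hT true).2, (hT false).2,
      hdisj (by decide)⟩ hnotrees

theorem stmt_13 {V : Type*} [Fintype V] [DecidableEq V]
    (d : ℕ) (hd : 4 ≤ d)
    (G : SimpleGraph V) [DecidableRel G.Adj]
    (hreg : G.IsRegularOfDegree d)
    (hcut : ∃ F : Finset (Sym2 V), (↑F : Set (Sym2 V)) ⊆ G.edgeSet ∧ F.card = 2 ∧
      ¬ (G.deleteEdges (↑F : Set (Sym2 V))).Connected)
    (hmin : ∀ F : Finset (Sym2 V), (↑F : Set (Sym2 V)) ⊆ G.edgeSet → F.card < 2 →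
      (G.deleteEdges (↑F : Set (Sym2 V))).Connected)
    (hnotrees : ¬ ∃ T₁ T₂ : SimpleGraph V,
      T₁ ≤ G ∧ T₂ ≤ G ∧ T₁.IsTree ∧ T₂.IsTree ∧ Disjoint T₁.edgeSet T₂.edgeSet) :
    3 * (d + 1) ≤ Fintype.card V :=
  stmt_13_general d hd G hreg hmin hnotrees
end

section
/- For every integer d ≥ 6, the polynomial P₁₀(x) = x¹⁰ + (8−2d)x⁹ + (d²−16d+30)x⁸ + (8d²−50d+58)x⁷ + (20d²−66d+36)x⁶ + (8d²+18d−70)x⁵ + (−29d²+140d−146)x⁴ + (−20d²+57d−21)x³ + (14d²−83d+109)x² + (4d²−13d+5)x + (−d²+5d−5) satisfies P₁₀(d − 5/(d+3)) > 0. -/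
/-! Clearing the denominator `(D + 3)^10` of `P₁₀(D - 5/(D + 3))` and expanding in powers of
`e = D - 6` gives a polynomial in `e` whose coefficients are all positive. -/

namespace P10

def eval (D x : ℝ) : ℝ :=
  x ^ 10 + (8 - 2 * D) * x ^ 9 + (D ^ 2 - 16 * D + 30) * x ^ 8 +
    (8 * D ^ 2 - 50 * D + 58) * x ^ 7 + (20 * D ^ 2 - 66 * D + 36) * x ^ 6 +
    (8 * D ^ 2 + 18 * D - 70) * x ^ 5 + (-29 * D ^ 2 + 140 * D - 146) * x ^ 4 +
    (-20 * D ^ 2 + 57 * D - 21) * x ^ 3 + (14 * D ^ 2 - 83 * D + 109) * x ^ 2 +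
    (4 * D ^ 2 - 13 * D + 5) * x + (-D ^ 2 + 5 * D - 5)

/-- `(D + 3)^10 · P₁₀(D - 5/(D + 3))` written as a polynomial in `e = D - 6`. -/
def shiftedNumerator (e : ℝ) : ℝ :=
  3491297096125 + 7098123045800 * e + 6413198622620 * e ^ 2 + 3414313916400 * e ^ 3 +
    1195581155750 * e ^ 4 + 290634210450 * e ^ 5 + 50374084575 * e ^ 6 + 6281781360 * e ^ 7 +
    560128225 * e ^ 8 + 34872750 * e ^ 9 + 1440675 * e ^ 10 + 35500 * e ^ 11 + 395 * e ^ 12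

theorem shiftedNumerator_pos {e : ℝ} (he : 0 ≤ e) : 0 < shiftedNumerator e := by
  lift e to NNReal using he
  unfold shiftedNumerator
  positivity

theorem eval_sub_div_eq {D : ℝ} (hD : D + 3 ≠ 0) :
    eval D (D - 5 / (D + 3)) = shiftedNumerator (D - 6) / (D + 3) ^ 10 := by
  unfold eval shiftedNumerator
  field_simp
  ring

theorem eval_sub_div_pos {D : ℝ} (hD : 6 ≤ D) : 0 < eval D (D - 5 / (D + 3)) := by
  rw [eval_sub_div_eq (by linarith)]
  exact div_pos (shiftedNumerator_pos (by linarith)) (by positivity)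

end P10

theorem stmt_17 (d : ℤ) (hd : 6 ≤ d) :
    (let D : ℝ := (d : ℝ); let x : ℝ := D - 5 / (D + 3);
      x ^ 10 + (8 - 2 * D) * x ^ 9 + (D ^ 2 - 16 * D + 30) * x ^ 8 +
        (8 * D ^ 2 - 50 * D + 58) * x ^ 7 + (20 * D ^ 2 - 66 * D + 36) * x ^ 6 +
        (8 * D ^ 2 + 18 * D - 70) * x ^ 5 + (-29 * D ^ 2 + 140 * D - 146) * x ^ 4 +
        (-20 * D ^ 2 + 57 * D - 21) * x ^ 3 + (14 * D ^ 2 - 83 * D + 109) * x ^ 2 +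
        (4 * D ^ 2 - 13 * D + 5) * x + (-D ^ 2 + 5 * D - 5)) > 0 :=
  P10.eval_sub_div_pos (by exact_mod_cast hd)
end
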